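/- arXiv:1402.6547 — 4 statements merged into one kernel-verified Lean document; each statement's English description precedes it below -/
import Mathlib

section
/- Suppose Q ∈ M(d,ℂ) is self-adjoint, Q ≠ 0, and V : [0,T] → M(d,ℂ) takes values in unitary matrices with V(0) = 1, and ∫₀ᵀ V(s)* Q V(s) ds = 0. Then max_{0 ≤ t ≤ T} ‖V(t) - 1‖ ≥ √2 - 1. -/
open scoped Matrix.Norms.L2Operator
open Matrix

/-!
Suppose `‖V t - 1‖ ≤ ε` on `[0, T]`. Writing `V = 1 + E`, the conjugate `V* Q V` differs from `Q`
by `E* Q + Q E + E* Q E`, of norm at most `(2ε + ε²)‖Q‖`. Integrating, `∫₀ᵀ V* Q V = 0` forces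
`T ‖Q‖ = ‖∫₀ᵀ (Q - V* Q V)‖ ≤ (2ε + ε²) T ‖Q‖`, so `2ε + ε² ≥ 1`, i.e. `ε ≥ √2 - 1`.
-/

theorem norm_star_mul_mul_sub_le {R : Type*} [NormedRing R] [StarRing R] [NormedStarGroup R]
    (a q : R) : ‖star a * q * a - q‖ ≤ (2 * ‖a - 1‖ + ‖a - 1‖ ^ 2) * ‖q‖ := by
  obtain ⟨e, rfl⟩ : ∃ e, a = 1 + e := ⟨a - 1, (add_sub_cancel 1 a).symm⟩
  have hexpand : star (1 + e) * q * (1 + e) - q = star e * q + q * e + star e * q * e := by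
    rw [star_add, star_one]
    noncomm_ring
  rw [add_sub_cancel_left]
  calc ‖star (1 + e) * q * (1 + e) - q‖ ≤ ‖star e‖ * ‖q‖ + ‖q‖ * ‖e‖ + ‖star e‖ * ‖q‖ * ‖e‖ := by
        rw [hexpand]
        refine (norm_add₃_le ..).trans (add_le_add_three (norm_mul_le ..) (norm_mul_le ..) ?_)
        exact (norm_mul_le ..).trans (mul_le_mul_of_nonneg_right (norm_mul_le ..) (norm_nonneg _))
    _ = (2 * ‖e‖ + ‖e‖ ^ 2) * ‖q‖ := by rw [norm_star]; ring

theorem norm_le_of_intervalIntegral_eq_zero {E : Type*} [NormedAddCommGroup E] [NormedSpace ℝ E]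
    [CompleteSpace E] {f : ℝ → E} {q : E} {T C : ℝ} (hT : 0 < T)
    (hf : IntervalIntegrable f MeasureTheory.volume 0 T)
    (hint : ∫ s in (0:ℝ)..T, f s = 0) (hbound : ∀ s ∈ Set.Icc 0 T, ‖q - f s‖ ≤ C) :
    ‖q‖ ≤ C := by
  have hq : ∫ s in (0:ℝ)..T, (q - f s) = T • q := by
    rw [intervalIntegral.integral_sub intervalIntegrable_const hf, hint,
      intervalIntegral.integral_const]
    simp
  have hle : ‖∫ s in (0:ℝ)..T, (q - f s)‖ ≤ C * |T - 0| :=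
    intervalIntegral.norm_integral_le_of_norm_le_const fun s hs => by
      rw [Set.uIoc_of_le hT.le] at hs
      exact hbound s (Set.Ioc_subset_Icc_self hs)
  rw [hq, norm_smul, Real.norm_of_nonneg hT.le, sub_zero, abs_of_pos hT, mul_comm C] at hle
  exact le_of_mul_le_mul_left hle hT

theorem stmt4_general {d : ℕ} {T : ℝ} (hT : 0 < T)
    (Q : Matrix (Fin d) (Fin d) ℂ) (hQne : Q ≠ 0)
    (V : ℝ → Matrix (Fin d) (Fin d) ℂ)
    (hVcont : ContinuousOn V (Set.Icc 0 T))
    (hint : ∫ s in (0:ℝ)..T, (V s)ᴴ * Q * V s = 0) :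
    ∃ t ∈ Set.Icc (0:ℝ) T, Real.sqrt 2 - 1 ≤ ‖V t - 1‖ := by
  obtain ⟨t, ht, hmax⟩ := isCompact_Icc.exists_isMaxOn (Set.nonempty_Icc.2 hT.le)
    (hVcont.sub continuousOn_const).norm
  refine ⟨t, ht, ?_⟩
  set ε := ‖V t - 1‖
  have hF : IntervalIntegrable (fun s => (V s)ᴴ * Q * V s) MeasureTheory.volume 0 T :=
    ContinuousOn.intervalIntegrable <| by
      rw [Set.uIcc_of_le hT.le]
      exact ((continuous_star.comp_continuousOn hVcont).mul continuousOn_const).mul hVcont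
  have hQle : ‖Q‖ ≤ (2 * ε + ε ^ 2) * ‖Q‖ := by
    refine norm_le_of_intervalIntegral_eq_zero hT hF hint fun s hs => ?_
    rw [norm_sub_rev]
    exact (norm_star_mul_mul_sub_le (V s) Q).trans (by gcongr; exacts [hmax hs, hmax hs])
  have hε : 1 ≤ 2 * ε + ε ^ 2 := le_of_mul_le_mul_right (by simpa using hQle) (norm_pos_iff.2 hQne)
  have hsqrt : Real.sqrt 2 ≤ ε + 1 := Real.sqrt_le_iff.2 ⟨by positivity, by linarith⟩
  linarith

theorem stmt4 {d : ℕ} {T : ℝ} (hT : 0 < T)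
    (Q : Matrix (Fin d) (Fin d) ℂ) (hQ : Qᴴ = Q) (hQne : Q ≠ 0)
    (V : ℝ → Matrix (Fin d) (Fin d) ℂ)
    (hVcont : ContinuousOn V (Set.Icc 0 T))
    (hVunit : ∀ t ∈ Set.Icc (0:ℝ) T, V t ∈ Matrix.unitaryGroup (Fin d) ℂ)
    (hV0 : V 0 = 1)
    (hint : ∫ s in (0:ℝ)..T, (V s)ᴴ * Q * V s = 0) :
    ∃ t ∈ Set.Icc (0:ℝ) T, Real.sqrt 2 - 1 ≤ ‖V t - 1‖ :=
  stmt4_general hT Q hQne V hVcont hint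
end

section
/- Let H_c : [0,T] → M(d,ℂ) be continuous and let V_c be the time-ordered exponential solving V_c'(t) = i H_c(t) V_c(t), V_c(0) = 1. Suppose Q ∈ M(d,ℂ) is self-adjoint, Q ≠ 0, and ∫₀ᵀ V_c(s)* Q V_c(s) ds = 0. Then max_{0 ≤ t ≤ T} ‖H_c(t)‖ ≥ ln(2)/(2T). -/
/-!
If `‖H_c‖ ≤ K` on `[0, T]`, Grönwall's inequality gives `‖V_c(t) - 1‖ ≤ e^{Kt} - 1`, so
conjugation by `V_c(s)` moves `Q` by at most `‖Q‖ (e^{2KT} - 1)`. The time average of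
`V_c(s)* Q V_c(s)` over `[0, T]` is `0`, hence `‖Q‖ ≤ ‖Q‖ (e^{2KT} - 1)`, which is impossible
for `Q ≠ 0` once `2KT < ln 2`. Continuity of `H_c` makes the maximum of `‖H_c‖` attained, so
it can serve as `K`.
-/

open scoped Matrix.Norms.L2Operator
open Matrix Set Real

lemma CStarRing.norm_one_le {E : Type*} [NormedRing E] [StarRing E] [CStarRing E] :
    ‖(1 : E)‖ ≤ 1 := by
  rcases subsingleton_or_nontrivial E with hE | hE
  · simp [Subsingleton.elim (1 : E) 0]
  · exact CStarRing.norm_one.le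

lemma gronwallBound_zero_mul_right (K r x : ℝ) :
    gronwallBound 0 K (K * r) x = r * (exp (K * x) - 1) := by
  rcases eq_or_ne K 0 with rfl | hK
  · simp [gronwallBound_K0]
  · simp [gronwallBound_of_K_ne_0 hK, mul_div_cancel_left₀ _ hK]

theorem norm_sub_le_mul_exp_sub_one_of_norm_deriv_le {E : Type*} [NormedAddCommGroup E]
    [NormedSpace ℝ E] {f f' : ℝ → E} {K r a b : ℝ} (hK : 0 ≤ K)
    (hf : ∀ t ∈ Icc a b, HasDerivAt f (f' t) t) (hfa : ‖f a‖ ≤ r)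
    (bound : ∀ t ∈ Ico a b, ‖f' t‖ ≤ K * ‖f t‖) :
    ∀ t ∈ Icc a b, ‖f t - f a‖ ≤ r * (exp (K * (t - a)) - 1) := by
  intro t ht
  rw [← gronwallBound_zero_mul_right]
  refine norm_le_gronwallBound_of_norm_deriv_right_le (f' := f')
    (fun s hs => ((hf s hs).sub_const _).continuousAt.continuousWithinAt)
    (fun s hs => ((hf s (Ico_subset_Icc_self hs)).sub_const _).hasDerivWithinAt)
    (by simp) (fun s hs => ?_) t ht
  calc ‖f' s‖ ≤ K * ‖f s‖ := bound s hs
    _ ≤ K * (‖f s - f a‖ + r) := by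
      gcongr
      exact (norm_le_norm_sub_add _ _).trans (by gcongr)
    _ = K * ‖f s - f a‖ + K * r := by ring

theorem norm_star_mul_mul_sub_le_s5 {E : Type*} [NormedRing E] [StarRing E] [CStarRing E]
    {V : E} {ε : ℝ} (Q : E) (hV : ‖V - 1‖ ≤ ε) :
    ‖star V * Q * V - Q‖ ≤ ‖Q‖ * ((1 + ε) ^ 2 - 1) := by
  have hV' : ‖V‖ ≤ 1 + ε :=
    (norm_le_norm_sub_add V 1).trans (by linarith [CStarRing.norm_one_le (E := E)])
  have hε : 0 ≤ ε := (norm_nonneg _).trans hV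
  have hsplit : star V * Q * V - Q = star (V - 1) * Q * V + Q * (V - 1) := by
    rw [star_sub, star_one]
    noncomm_ring
  calc ‖star V * Q * V - Q‖ ≤ ‖star (V - 1)‖ * ‖Q‖ * ‖V‖ + ‖Q‖ * ‖V - 1‖ := by
        rw [hsplit]
        refine (norm_add_le _ _).trans (add_le_add ?_ (norm_mul_le _ _))
        exact (norm_mul_le _ _).trans (by gcongr; exact norm_mul_le _ _)
    _ ≤ ε * ‖Q‖ * (1 + ε) + ‖Q‖ * ε := by
        rw [norm_star]
        gcongr
    _ = ‖Q‖ * ((1 + ε) ^ 2 - 1) := by ring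

theorem norm_le_of_intervalIntegral_eq_zero_s5 {E : Type*} [NormedAddCommGroup E]
    [NormedSpace ℝ E] [CompleteSpace E] {g : ℝ → E} {x : E} {C a b : ℝ} (hab : a < b)
    (hg : ContinuousOn g (Icc a b)) (hint : ∫ s in a..b, g s = 0)
    (bound : ∀ s ∈ Icc a b, ‖g s - x‖ ≤ C) :
    ‖x‖ ≤ C := by
  have hx : (b - a) • x = ∫ s in a..b, (x - g s) := by
    rw [intervalIntegral.integral_sub intervalIntegrable_const
      (hg.intervalIntegrable_of_Icc hab.le), hint, sub_zero, intervalIntegral.integral_const]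
  have hnorm : ‖(b - a) • x‖ ≤ C * |b - a| := by
    rw [hx]
    refine intervalIntegral.norm_integral_le_of_norm_le_const fun s hs => ?_
    rw [norm_sub_rev]
    exact bound s (Ioc_subset_Icc_self (uIoc_of_le hab.le ▸ hs))
  rw [norm_smul, norm_of_nonneg (sub_nonneg.2 hab.le), abs_of_pos (sub_pos.2 hab),
    mul_comm] at hnorm
  exact le_of_mul_le_mul_right hnorm (sub_pos.2 hab)

theorem stmt5_general {d : ℕ} {T : ℝ} (hT : 0 < T)
    (Hc : ℝ → Matrix (Fin d) (Fin d) ℂ)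
    (hHc : ContinuousOn Hc (Set.Icc 0 T))
    (Vc : ℝ → Matrix (Fin d) (Fin d) ℂ) (hVc0 : Vc 0 = 1)
    (hVc : ∀ t ∈ Set.Icc (0:ℝ) T, HasDerivAt Vc (Complex.I • (Hc t * Vc t)) t)
    (Q : Matrix (Fin d) (Fin d) ℂ) (hQne : Q ≠ 0)
    (hint : ∫ s in (0:ℝ)..T, (Vc s)ᴴ * Q * Vc s = 0) :
    ∃ t ∈ Set.Icc (0:ℝ) T, Real.log 2 / (2 * T) ≤ ‖Hc t‖ := by
  by_contra! hsmall
  obtain ⟨t₀, ht₀, hmax⟩ := isCompact_Icc.exists_isMaxOn (nonempty_Icc.2 hT.le) hHc.norm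
  set K := ‖Hc t₀‖
  have hgrowth : ∀ t ∈ Icc 0 T, ‖Vc t - 1‖ ≤ exp (K * t) - 1 := by
    have := norm_sub_le_mul_exp_sub_one_of_norm_deriv_le (r := 1) (norm_nonneg (Hc t₀)) hVc
      (by rw [hVc0]; exact CStarRing.norm_one_le) fun t ht => ?_
    · simpa [hVc0] using this
    rw [norm_smul, Complex.norm_I, one_mul]
    exact (norm_mul_le _ _).trans (by gcongr; exact hmax (Ico_subset_Icc_self ht))
  have hconj : ∀ s ∈ Icc 0 T, ‖(Vc s)ᴴ * Q * Vc s - Q‖ ≤ ‖Q‖ * (exp (2 * K * T) - 1) := by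
    intro s hs
    refine (norm_star_mul_mul_sub_le_s5 Q (hgrowth s hs)).trans ?_
    rw [add_sub_cancel, ← exp_nat_mul]
    refine mul_le_mul_of_nonneg_left (sub_le_sub_right (exp_le_exp.2 ?_) 1) (norm_nonneg Q)
    have : K * s ≤ K * T := mul_le_mul_of_nonneg_left hs.2 (norm_nonneg _)
    push_cast
    linarith
  have hVcont : ContinuousOn Vc (Icc 0 T) := fun t ht => (hVc t ht).continuousAt.continuousWithinAt
  have hQle := norm_le_of_intervalIntegral_eq_zero_s5 hT
    (((continuous_star.comp_continuousOn hVcont).mul continuousOn_const).mul hVcont) hint hconj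
  have hexp : exp (2 * K * T) < 2 := by
    refine (exp_lt_exp.2 ?_).trans_eq (exp_log two_pos)
    have := hsmall t₀ ht₀
    rw [lt_div_iff₀ (by positivity)] at this
    linarith
  nlinarith [norm_pos_iff.2 hQne]

theorem stmt5 {d : ℕ} {T : ℝ} (hT : 0 < T)
    (Hc : ℝ → Matrix (Fin d) (Fin d) ℂ)
    (hHc : ContinuousOn Hc (Set.Icc 0 T))
    (Vc : ℝ → Matrix (Fin d) (Fin d) ℂ) (hVc0 : Vc 0 = 1)
    (hVc : ∀ t ∈ Set.Icc (0:ℝ) T, HasDerivAt Vc (Complex.I • (Hc t * Vc t)) t)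
    (Q : Matrix (Fin d) (Fin d) ℂ) (hQ : Qᴴ = Q) (hQne : Q ≠ 0)
    (hint : ∫ s in (0:ℝ)..T, (Vc s)ᴴ * Q * Vc s = 0) :
    ∃ t ∈ Set.Icc (0:ℝ) T, Real.log 2 / (2 * T) ≤ ‖Hc t‖ :=
  stmt5_general hT Hc hHc Vc hVc0 hVc Q hQne hint
end

section
/- Let A, B be bounded operators on a Banach space such that ‖e^{tB}‖ ≤ 1 for all t ≥ 0 (B generates a contraction semigroup; in the bounded case, take ‖e^{tB}‖ ≤ 1). Then for all α ≥ 0, ‖e^{αA} - e^{αB}‖ ≤ e^{α‖A - B‖} - 1. -/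
/-!
Cut `[0, α]` into `n` equal steps: `e^{αA} - e^{αB} = Pⁿ - Qⁿ` with `P = e^{αA/n}` and the
contraction `Q = e^{αB/n}`. Telescoping gives `‖Pⁿ - Qⁿ‖ ≤ (1 + ‖P - Q‖)ⁿ - 1 ≤ e^{n‖P - Q‖} - 1`,
and `n‖P - Q‖ → α‖A - B‖` because `t ↦ e^{tA} - e^{tB}` vanishes at `0` with derivative `A - B`.
-/

open NormedSpace Filter Topology

section NormedRing

variable {R : Type*} [NormedRing R]

theorem norm_mul_pow_le_of_norm_le_one {q : R} (hq : ‖q‖ ≤ 1) (x : R) (n : ℕ) :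
    ‖x * q ^ n‖ ≤ ‖x‖ := by
  induction n with
  | zero => simp
  | succ n ih =>
    calc ‖x * q ^ (n + 1)‖ = ‖x * q ^ n * q‖ := by rw [pow_succ, mul_assoc]
      _ ≤ ‖x * q ^ n‖ * ‖q‖ := norm_mul_le _ _
      _ ≤ ‖x‖ * 1 := by gcongr
      _ = ‖x‖ := mul_one _

theorem norm_pow_sub_pow_le_of_norm_le_one {p q : R} (hq : ‖q‖ ≤ 1) (n : ℕ) :
    ‖p ^ n - q ^ n‖ ≤ (1 + ‖p - q‖) ^ n - 1 := by
  have hp : ‖p‖ ≤ 1 + ‖p - q‖ := by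
    linarith [norm_le_norm_add_norm_sub' p q]
  induction n with
  | zero => simp
  | succ n ih =>
    calc ‖p ^ (n + 1) - q ^ (n + 1)‖ = ‖p * (p ^ n - q ^ n) + (p - q) * q ^ n‖ := by
          rw [pow_succ', pow_succ']; noncomm_ring
      _ ≤ ‖p‖ * ‖p ^ n - q ^ n‖ + ‖p - q‖ :=
          (norm_add_le _ _).trans
            (add_le_add (norm_mul_le _ _) (norm_mul_pow_le_of_norm_le_one hq _ n))
      _ ≤ (1 + ‖p - q‖) * ((1 + ‖p - q‖) ^ n - 1) + ‖p - q‖ := by gcongr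
      _ = (1 + ‖p - q‖) ^ (n + 1) - 1 := by ring

theorem norm_pow_sub_pow_le_exp_of_norm_le_one {p q : R} (hq : ‖q‖ ≤ 1) (n : ℕ) :
    ‖p ^ n - q ^ n‖ ≤ Real.exp (n * ‖p - q‖) - 1 := by
  have h := Real.add_one_le_exp ‖p - q‖
  calc ‖p ^ n - q ^ n‖ ≤ (1 + ‖p - q‖) ^ n - 1 := norm_pow_sub_pow_le_of_norm_le_one hq n
    _ ≤ Real.exp ‖p - q‖ ^ n - 1 := by gcongr; linarith
    _ = Real.exp (n * ‖p - q‖) - 1 := by rw [← Real.exp_nat_mul]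

end NormedRing

theorem HasDerivAt.tendsto_natCast_smul_apply_inv {𝕜 F : Type*} [RCLike 𝕜]
    [NormedAddCommGroup F] [NormedSpace 𝕜 F] {f : 𝕜 → F} {f' : F}
    (hf : HasDerivAt f f' 0) (h0 : f 0 = 0) :
    Tendsto (fun n : ℕ => (n : 𝕜) • f (n : 𝕜)⁻¹) atTop (𝓝 f') := by
  have hinv : Tendsto (fun n : ℕ => (n : 𝕜)⁻¹) atTop (𝓝[≠] 0) :=
    tendsto_nhdsWithin_iff.2 ⟨tendsto_inv_atTop_nhds_zero_nat,
      (eventually_ne_atTop 0).mono fun n hn => by simpa using hn⟩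
  simpa [Function.comp_def, h0] using hf.tendsto_slope_zero.comp hinv

section BanachAlgebra

variable {𝕂 𝔸 : Type*} [RCLike 𝕂] [NormedRing 𝔸] [NormedAlgebra 𝕂 𝔸] [CompleteSpace 𝔸]

variable (𝕂) in
theorem exp_eq_exp_inv_natCast_smul_pow (x : 𝔸) {n : ℕ} (hn : n ≠ 0) :
    exp x = exp ((n : 𝕂)⁻¹ • x) ^ n := by
  -- `exp` does not depend on the `ℚ`-algebra structure that `exp_nsmul` asks for.
  let _ : NormedAlgebra ℚ 𝔸 := NormedAlgebra.restrictScalars ℚ 𝕂 𝔸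
  rw [← exp_nsmul, ← Nat.cast_smul_eq_nsmul 𝕂, smul_inv_smul₀ (Nat.cast_ne_zero.2 hn)]

theorem hasDerivAt_exp_smul_sub_exp_smul_zero (x y : 𝔸) :
    HasDerivAt (fun t : 𝕂 => exp (t • x) - exp (t • y)) (x - y) 0 := by
  have h := (hasDerivAt_exp_smul_const x (0 : 𝕂)).sub (hasDerivAt_exp_smul_const y 0)
  rwa [zero_smul, zero_smul, exp_zero, one_mul, one_mul] at h

theorem norm_exp_sub_exp_le (x y : 𝔸) (hy : ∀ n : ℕ, 0 < n → ‖exp ((n : 𝕂)⁻¹ • y)‖ ≤ 1) :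
    ‖exp x - exp y‖ ≤ Real.exp ‖x - y‖ - 1 := by
  have hlim : Tendsto (fun n : ℕ => Real.exp (n * ‖exp ((n : 𝕂)⁻¹ • x) - exp ((n : 𝕂)⁻¹ • y)‖) - 1)
      atTop (𝓝 (Real.exp ‖x - y‖ - 1)) := by
    have h := ((hasDerivAt_exp_smul_sub_exp_smul_zero (𝕂 := 𝕂) x y).tendsto_natCast_smul_apply_inv
      (by simp)).norm
    simp only [norm_smul, RCLike.norm_natCast] at h
    exact h.rexp.sub_const 1
  refine ge_of_tendsto hlim ((eventually_gt_atTop 0).mono fun n hn => ?_)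
  rw [exp_eq_exp_inv_natCast_smul_pow 𝕂 x hn.ne', exp_eq_exp_inv_natCast_smul_pow 𝕂 y hn.ne']
  exact norm_pow_sub_pow_le_exp_of_norm_le_one (hy n hn) n

end BanachAlgebra

theorem stmt7 {X : Type*} [NormedAddCommGroup X] [NormedSpace ℂ X] [CompleteSpace X]
    (A B : X →L[ℂ] X)
    (hB : ∀ t : ℝ, 0 ≤ t → ‖exp ((t : ℂ) • B)‖ ≤ 1) :
    ∀ α : ℝ, 0 ≤ α →
      ‖exp ((α : ℂ) • A) - exp ((α : ℂ) • B)‖ ≤ Real.exp (α * ‖A - B‖) - 1 := by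
  intro α hα
  have h := norm_exp_sub_exp_le (𝕂 := ℂ) ((α : ℂ) • A) ((α : ℂ) • B) fun n _ => by
    rw [smul_smul, show (n : ℂ)⁻¹ * α = ((α / n : ℝ) : ℂ) by push_cast; ring]
    exact hB (α / n) (by positivity)
  rwa [← smul_sub, norm_smul, Complex.norm_real, Real.norm_of_nonneg hα] at h
end

section
/- Let h : ℝ → ℝ be nonnegative and measurable with ∫ (u² + a²)²/(a⁴ + u² a²) · h(u) du = C < ∞, where a > 0. Then for every M ≠ 0, ∫ h(u)/((u - M)² + a²) du ≤ C/M². -/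
open MeasureTheory

theorem stmt10 {a : ℝ} (ha : 0 < a) (h : ℝ → ℝ)
    (hmeas : Measurable h) (hnn : ∀ u, 0 ≤ h u)
    (hint : Integrable (fun u : ℝ => (u ^ 2 + a ^ 2) ^ 2 / (a ^ 4 + u ^ 2 * a ^ 2) * h u))
    (C : ℝ) (hC : C = ∫ u : ℝ, (u ^ 2 + a ^ 2) ^ 2 / (a ^ 4 + u ^ 2 * a ^ 2) * h u)
    (M : ℝ) (hM : M ≠ 0) :
    ∫ u : ℝ, h u / ((u - M) ^ 2 + a ^ 2) ≤ C / M ^ 2 := by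
  have hM2 : 0 < M ^ 2 := by positivity
  have key : ∀ u : ℝ, h u / ((u - M) ^ 2 + a ^ 2) ≤
      (u ^ 2 + a ^ 2) ^ 2 / (a ^ 4 + u ^ 2 * a ^ 2) * h u / M ^ 2 := by
    intro u
    have hd1 : 0 < (u - M) ^ 2 + a ^ 2 := by positivity
    have hd2 : 0 < a ^ 4 + u ^ 2 * a ^ 2 := by positivity
    have cs : a ^ 2 * M ^ 2 ≤ (u ^ 2 + a ^ 2) * ((u - M) ^ 2 + a ^ 2) := by
      nlinarith [sq_nonneg (u * (u - M) + a ^ 2), sq_nonneg (u * a - a * (u - M))]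
    have p1 : 0 ≤ h u * ((u ^ 2 + a ^ 2) * ((u - M) ^ 2 + a ^ 2) - a ^ 2 * M ^ 2) :=
      mul_nonneg (hnn u) (by linarith)
    have p2 : 0 ≤ (u ^ 2 + a ^ 2) *
        (h u * ((u ^ 2 + a ^ 2) * ((u - M) ^ 2 + a ^ 2) - a ^ 2 * M ^ 2)) :=
      mul_nonneg (by positivity) p1
    rw [div_le_div_iff₀ hd1 hM2, div_mul_eq_mul_div,
      div_mul_eq_mul_div, le_div_iff₀ hd2]
    nlinarith [p2]
  have hgint : Integrable (fun u : ℝ =>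
      (u ^ 2 + a ^ 2) ^ 2 / (a ^ 4 + u ^ 2 * a ^ 2) * h u / M ^ 2) := hint.div_const _
  have hfmeas : Measurable (fun u : ℝ => h u / ((u - M) ^ 2 + a ^ 2)) := by
    apply hmeas.div
    exact (((measurable_id.sub_const M).pow_const 2).add_const _)
  have hfint : Integrable (fun u : ℝ => h u / ((u - M) ^ 2 + a ^ 2)) := by
    apply hgint.mono' hfmeas.aestronglyMeasurable
    filter_upwards with u
    have hd1 : 0 < (u - M) ^ 2 + a ^ 2 := by positivity
    rw [Real.norm_eq_abs, abs_of_nonneg (div_nonneg (hnn u) hd1.le)]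
    exact key u
  calc ∫ u : ℝ, h u / ((u - M) ^ 2 + a ^ 2)
      ≤ ∫ u : ℝ, (u ^ 2 + a ^ 2) ^ 2 / (a ^ 4 + u ^ 2 * a ^ 2) * h u / M ^ 2 :=
        integral_mono hfint hgint key
    _ = C / M ^ 2 := by rw [integral_div, hC]
end
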